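/- Let G be a finite simple graph and let k ≥ 2 be a natural number. If every vertex of G has degree at most k, then every element of the poset Pos(G) has at most k+1 immediate successors (elements covering it) and at most 2k+6 strict successors in total. -/

import Mathlib

/-!
Every generating cover of `Pos(G)` strictly raises the rank
`v < v_a, v_b < e_1, e_2 < ⊤₁, ⊤₂, ∞_a, ∞_b`, so a chain of two generating covers is
never a cover: the covers of `Pos(G)` are exactly the generating ones. The upper set of an
element is then read off the generators. A vertex `v` lies below its two copies, `∞_a`, `∞_b`,
`⊤₁`, `⊤₂` and the two copies of each of its at most `k` edges: at most `2k + 6` elements.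
A vertex copy `v_a` is covered by `∞_a` and by one copy of each edge at `v` (each edge once,
as its endpoints differ), or by `∞_a`, `⊤₁`, `⊤₂` if `v` is isolated: at most `max 3 (k + 1)`
elements.
-/

/-- The carrier of the poset `Pos(G)`: vertices, two copies of the vertices,
two copies of the edges, and four auxiliary elements. -/
inductive PosElem (V E : Type) : Type where
  | ver (v : V)
  | verA (v : V)
  | verB (v : V)
  | edge1 (e : E)
  | edge2 (e : E)
  | top1
  | top2
  | infA
  | infB

/-- The covering relation of the poset `Pos(G)`, for a graph `G` together with a
choice `ε` of an ordered pair of endpoints for each edge. -/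
inductive PosCov {V : Type} (G : SimpleGraph V) (ε : ↥G.edgeSet → V × V) :
    PosElem V ↥G.edgeSet → PosElem V ↥G.edgeSet → Prop where
  | ver_verA (v : V) : PosCov G ε (.ver v) (.verA v)
  | ver_verB (v : V) : PosCov G ε (.ver v) (.verB v)
  | verA_infA (v : V) : PosCov G ε (.verA v) .infA
  | verB_infB (v : V) : PosCov G ε (.verB v) .infB
  | edge1_top1 (e : ↥G.edgeSet) : PosCov G ε (.edge1 e) .top1
  | edge1_top2 (e : ↥G.edgeSet) : PosCov G ε (.edge1 e) .top2
  | edge2_top1 (e : ↥G.edgeSet) : PosCov G ε (.edge2 e) .top1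
  | edge2_top2 (e : ↥G.edgeSet) : PosCov G ε (.edge2 e) .top2
  | isolA_top1 (v : V) (hv : ∀ w, ¬ G.Adj v w) : PosCov G ε (.verA v) .top1
  | isolA_top2 (v : V) (hv : ∀ w, ¬ G.Adj v w) : PosCov G ε (.verA v) .top2
  | isolB_top1 (v : V) (hv : ∀ w, ¬ G.Adj v w) : PosCov G ε (.verB v) .top1
  | isolB_top2 (v : V) (hv : ∀ w, ¬ G.Adj v w) : PosCov G ε (.verB v) .top2
  | ua_edge1 (e : ↥G.edgeSet) : PosCov G ε (.verA (ε e).1) (.edge1 e)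
  | vb_edge1 (e : ↥G.edgeSet) : PosCov G ε (.verB (ε e).2) (.edge1 e)
  | ub_edge2 (e : ↥G.edgeSet) : PosCov G ε (.verB (ε e).1) (.edge2 e)
  | va_edge2 (e : ↥G.edgeSet) : PosCov G ε (.verA (ε e).2) (.edge2 e)

/-- The order of `Pos(G)`: the reflexive-transitive closure of the covering relation. -/
def PosLe {V : Type} (G : SimpleGraph V) (ε : ↥G.edgeSet → V × V)
    (x y : PosElem V ↥G.edgeSet) : Prop :=
  Relation.ReflTransGen (PosCov G ε) x y

/-- `ε` assigns to every edge an ordered pair of its two endpoints. -/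
def OrientOK {V : Type} (G : SimpleGraph V) (ε : ↥G.edgeSet → V × V) : Prop :=
  ∀ e : ↥G.edgeSet, (e : Sym2 V) = s((ε e).1, (ε e).2)

/-- A p-morphism with respect to given order relations: the homomorphism property (HP)
and the backward property (BP). -/
def IsPMorphismRel {α β : Type} (leP : α → α → Prop) (leQ : β → β → Prop)
    (h : α → β) : Prop :=
  (∀ x y, leP x y → leQ (h x) (h y)) ∧
  (∀ (x : α) (y : β), leQ (h x) y → ∃ z : α, leP x z ∧ h z = y)

/-- The strict order of `Pos(G)`. -/
def PosLt {V : Type} (G : SimpleGraph V) (ε : ↥G.edgeSet → V × V)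
    (x y : PosElem V ↥G.edgeSet) : Prop :=
  PosLe G ε x y ∧ x ≠ y

/-- `y` is an immediate successor of `x` in `Pos(G)`: `y` covers `x`. -/
def PosCovBy {V : Type} (G : SimpleGraph V) (ε : ↥G.edgeSet → V × V)
    (x y : PosElem V ↥G.edgeSet) : Prop :=
  PosLt G ε x y ∧ ∀ z, PosLt G ε x z → ¬ PosLt G ε z y

section Orientation

variable {V E : Type} (ε : E → V × V)

def edgesFrom (v : V) : Set E := {e | (ε e).1 = v}

def edgesTo (v : V) : Set E := {e | (ε e).2 = v}

end Orientation

section Degree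

variable {V : Type} {G : SimpleGraph V} {ε : ↥G.edgeSet → V × V}

lemma OrientOK.adj (hε : OrientOK G ε) (e : ↥G.edgeSet) : G.Adj (ε e).1 (ε e).2 := by
  have he := e.2
  rwa [hε e, SimpleGraph.mem_edgeSet] at he

lemma OrientOK.ncard_edgesFrom_add_ncard_edgesTo_le_degree [Fintype V] [DecidableRel G.Adj]
    (hε : OrientOK G ε) (v : V) :
    (edgesFrom ε v).ncard + (edgesTo ε v).ncard ≤ G.degree v := by
  have hdisj : Disjoint (edgesFrom ε v) (edgesTo ε v) :=
    Set.disjoint_left.2 fun e hfrom hto => G.irrefl (hfrom ▸ hto ▸ hε.adj e)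
  have hinc : ∀ e ∈ edgesFrom ε v ∪ edgesTo ε v, (e : Sym2 V) ∈ G.incidenceSet v := by
    rintro e (rfl | rfl)
    · exact ⟨e.2, hε e ▸ Sym2.mem_mk_left _ _⟩
    · exact ⟨e.2, hε e ▸ Sym2.mem_mk_right _ _⟩
  calc (edgesFrom ε v).ncard + (edgesTo ε v).ncard
      = (edgesFrom ε v ∪ edgesTo ε v).ncard := (Set.ncard_union_eq hdisj).symm
    _ ≤ (G.incidenceSet v).ncard :=
        Set.ncard_le_ncard_of_injOn _ hinc Subtype.val_injective.injOn
    _ = G.degree v := by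
        classical
        rw [← Nat.card_coe_set_eq, Nat.card_congr (G.incidenceSetEquivNeighborSet v),
          Nat.card_eq_fintype_card, G.card_neighborSet_eq_degree]

end Degree

namespace PosElem

variable {V E : Type}

instance [Finite V] [Finite E] : Finite (PosElem V E) :=
  Finite.of_injective (β := V ⊕ V ⊕ V ⊕ E ⊕ E ⊕ Fin 4)
    (fun
      | ver v => .inl v
      | verA v => .inr (.inl v)
      | verB v => .inr (.inr (.inl v))
      | edge1 e => .inr (.inr (.inr (.inl e)))
      | edge2 e => .inr (.inr (.inr (.inr (.inl e))))
      | top1 => .inr (.inr (.inr (.inr (.inr 0))))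
      | top2 => .inr (.inr (.inr (.inr (.inr 1))))
      | infA => .inr (.inr (.inr (.inr (.inr 2))))
      | infB => .inr (.inr (.inr (.inr (.inr 3)))))
    (by intro x y h; cases x <;> cases y <;> simp_all)

def rank : PosElem V E → ℕ
  | ver _ => 0
  | verA _ | verB _ => 1
  | edge1 _ | edge2 _ => 2
  | top1 | top2 | infA | infB => 3

def upperSetBound (ε : E → V × V) : PosElem V E → Set (PosElem V E)
  | ver v => {ver v, verA v, verB v, infA, infB, top1, top2} ∪
      (edge1 '' (edgesFrom ε v ∪ edgesTo ε v) ∪ edge2 '' (edgesFrom ε v ∪ edgesTo ε v))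
  | verA v => {verA v, infA, top1, top2} ∪ (edge1 '' edgesFrom ε v ∪ edge2 '' edgesTo ε v)
  | verB v => {verB v, infB, top1, top2} ∪ (edge1 '' edgesTo ε v ∪ edge2 '' edgesFrom ε v)
  | edge1 e => {edge1 e, top1, top2}
  | edge2 e => {edge2 e, top1, top2}
  | x => {x}

lemma mem_upperSetBound_self (ε : E → V × V) (x : PosElem V E) : x ∈ upperSetBound ε x := by
  cases x <;> simp [upperSetBound]

lemma ncard_upperSetBound_le [Finite E] {ε : E → V × V} {k : ℕ}
    (hk : ∀ v, (edgesFrom ε v).ncard + (edgesTo ε v).ncard ≤ k) (x : PosElem V E) :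
    (upperSetBound ε x).ncard ≤ 2 * k + 7 := by
  cases x with
  | ver v =>
    have hinc := (Set.ncard_union_le (edgesFrom ε v) (edgesTo ε v)).trans (hk v)
    grw [upperSetBound, Set.ncard_union_le, Set.ncard_union_le, Set.ncard_image_le,
      Set.ncard_image_le, hinc]
    grw [Set.ncard_insert_le, Set.ncard_insert_le, Set.ncard_insert_le, Set.ncard_insert_le,
      Set.ncard_insert_le, Set.ncard_insert_le, Set.ncard_singleton]
    omega
  | verA v | verB v =>
    have := hk v
    grw [upperSetBound, Set.ncard_union_le, Set.ncard_union_le, Set.ncard_image_le,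
      Set.ncard_image_le, Set.ncard_insert_le, Set.ncard_insert_le, Set.ncard_insert_le,
      Set.ncard_singleton]
    omega
  | edge1 e | edge2 e =>
    grw [upperSetBound, Set.ncard_insert_le, Set.ncard_insert_le, Set.ncard_singleton]
    omega
  | top1 | top2 | infA | infB => simp [upperSetBound]

end PosElem

section Order

open PosElem

variable {V : Type} {G : SimpleGraph V} {ε : ↥G.edgeSet → V × V} {x y : PosElem V ↥G.edgeSet}

lemma PosCov.rank_lt (h : PosCov G ε x y) : x.rank < y.rank := by
  cases h <;> simp [rank]

lemma PosLe.rank_le (h : PosLe G ε x y) : x.rank ≤ y.rank := by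
  induction h with
  | refl => rfl
  | tail _ hcov ih => exact ih.trans hcov.rank_lt.le

lemma PosCovBy.posCov (h : PosCovBy G ε x y) : PosCov G ε x y := by
  obtain ⟨⟨hle, hne⟩, hmin⟩ := h
  rcases hle.cases_head with rfl | ⟨z, hxz, hzy⟩
  · exact absurd rfl hne
  rcases hzy.cases_head with rfl | ⟨w, hzw, hwy⟩
  · exact hxz
  refine absurd ⟨Relation.ReflTransGen.head hzw hwy, fun hzy => ?_⟩
    (hmin z ⟨.single hxz, fun hxz' => hxz.rank_lt.ne (congrArg rank hxz')⟩)
  exact (hzw.rank_lt.trans_le (PosLe.rank_le hwy)).ne (congrArg rank hzy)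

lemma PosCov.upperSetBound_subset (h : PosCov G ε x y) : upperSetBound ε y ⊆ upperSetBound ε x := by
  cases h <;> intro z hz <;> aesop (add norm [upperSetBound, edgesFrom, edgesTo])

lemma PosLe.mem_upperSetBound (h : PosLe G ε x y) : y ∈ upperSetBound ε x := by
  suffices upperSetBound ε y ⊆ upperSetBound ε x from this (mem_upperSetBound_self ε y)
  induction h with
  | refl => rfl
  | tail _ hcov ih => exact hcov.upperSetBound_subset.trans ih

lemma posLt_subset_upperSetBound_diff (x : PosElem V ↥G.edgeSet) :
    {y | PosLt G ε x y} ⊆ upperSetBound ε x \ {x} :=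
  fun _ ⟨hle, hne⟩ => ⟨hle.mem_upperSetBound, hne.symm⟩

end Order

section Covers

open PosElem

variable {V : Type} [Finite V] {G : SimpleGraph V} {ε : ↥G.edgeSet → V × V}

lemma ncard_insert_image_union_image_le {α β : Type} [Finite α] (b : β) (f g : α → β)
    (s t : Set α) : (insert b (f '' s ∪ g '' t)).ncard ≤ s.ncard + t.ncard + 1 := by
  grw [Set.ncard_insert_le, Set.ncard_union_le, Set.ncard_image_le, Set.ncard_image_le]

lemma ncard_triple_le {α : Type} (a b c : α) : ({a, b, c} : Set α).ncard ≤ 3 := by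
  grw [Set.ncard_insert_le, Set.ncard_insert_le, Set.ncard_singleton]

lemma ncard_posCov_verA_le (hε : OrientOK G ε) (v : V) :
    {y | PosCov G ε (verA v) y}.ncard ≤
      max 3 ((edgesFrom ε v).ncard + (edgesTo ε v).ncard + 1) := by
  by_cases hv : ∀ w, ¬ G.Adj v w
  · refine le_max_of_le_left ((Set.ncard_le_ncard (t := {infA, top1, top2}) ?_).trans
      (ncard_triple_le _ _ _))
    rintro y h
    cases h with
    | ua_edge1 e => exact absurd (hε.adj e) (hv _)
    | va_edge2 e => exact absurd (hε.adj e).symm (hv _)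
    | _ => simp
  · refine le_max_of_le_right ((Set.ncard_le_ncard
      (t := insert infA (edge1 '' edgesFrom ε v ∪ edge2 '' edgesTo ε v)) ?_).trans
      (ncard_insert_image_union_image_le ..))
    rintro y h
    cases h with
    | isolA_top1 _ hv' | isolA_top2 _ hv' => exact absurd hv' hv
    | _ => simp [edgesFrom, edgesTo]

lemma ncard_posCov_verB_le (hε : OrientOK G ε) (v : V) :
    {y | PosCov G ε (verB v) y}.ncard ≤
      max 3 ((edgesTo ε v).ncard + (edgesFrom ε v).ncard + 1) := by
  by_cases hv : ∀ w, ¬ G.Adj v w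
  · refine le_max_of_le_left ((Set.ncard_le_ncard (t := {infB, top1, top2}) ?_).trans
      (ncard_triple_le _ _ _))
    rintro y h
    cases h with
    | vb_edge1 e => exact absurd (hε.adj e).symm (hv _)
    | ub_edge2 e => exact absurd (hε.adj e) (hv _)
    | _ => simp
  · refine le_max_of_le_right ((Set.ncard_le_ncard
      (t := insert infB (edge1 '' edgesTo ε v ∪ edge2 '' edgesFrom ε v)) ?_).trans
      (ncard_insert_image_union_image_le ..))
    rintro y h
    cases h with
    | isolB_top1 _ hv' | isolB_top2 _ hv' => exact absurd hv' hv
    | _ => simp [edgesFrom, edgesTo]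

lemma ncard_posCov_le (hε : OrientOK G ε) {k : ℕ} (hk2 : 2 ≤ k)
    (hk : ∀ v, (edgesFrom ε v).ncard + (edgesTo ε v).ncard ≤ k) (x : PosElem V ↥G.edgeSet) :
    {y | PosCov G ε x y}.ncard ≤ k + 1 := by
  cases x with
  | ver v =>
    grw [Set.ncard_le_ncard (t := {verA v, verB v}) (by rintro y ⟨⟩ <;> simp),
      Set.ncard_insert_le, Set.ncard_singleton]
    omega
  | verA v => have := ncard_posCov_verA_le hε v; have := hk v; omega
  | verB v => have := ncard_posCov_verB_le hε v; have := hk v; omega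
  | edge1 e | edge2 e =>
    grw [Set.ncard_le_ncard (t := {top1, top2}) (by rintro y ⟨⟩ <;> simp),
      Set.ncard_insert_le, Set.ncard_singleton]
    omega
  | top1 | top2 | infA | infB =>
    grw [Set.ncard_le_ncard (t := ∅) (by rintro y ⟨⟩)]
    simp

end Covers

open PosElem in
theorem degree_bounds_general {V : Type} [Fintype V]
    (G : SimpleGraph V) [DecidableRel G.Adj]
    (ε : ↥G.edgeSet → V × V) (hε : OrientOK G ε)
    (k : ℕ) (hk : 2 ≤ k) (hdeg : ∀ v : V, G.degree v ≤ k) :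
    ∀ x : PosElem V ↥G.edgeSet,
      {y | PosCovBy G ε x y}.ncard ≤ k + 1 ∧
      {y | PosLt G ε x y}.ncard ≤ 2 * k + 6 := by
  have hk' : ∀ v, (edgesFrom ε v).ncard + (edgesTo ε v).ncard ≤ k := fun v =>
    (hε.ncard_edgesFrom_add_ncard_edgesTo_le_degree v).trans (hdeg v)
  intro x
  constructor
  · calc _ ≤ {y | PosCov G ε x y}.ncard := Set.ncard_le_ncard fun _ => PosCovBy.posCov
      _ ≤ k + 1 := ncard_posCov_le hε hk hk' x
  · calc _ ≤ (upperSetBound ε x \ {x}).ncard :=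
          Set.ncard_le_ncard (posLt_subset_upperSetBound_diff x)
      _ = (upperSetBound ε x).ncard - 1 :=
          Set.ncard_sdiff_singleton_of_mem (mem_upperSetBound_self ε x)
      _ ≤ 2 * k + 6 := by have := ncard_upperSetBound_le hk' x; omega

theorem degree_bounds {V : Type} [Fintype V] [DecidableEq V]
    (G : SimpleGraph V) [DecidableRel G.Adj]
    (ε : ↥G.edgeSet → V × V) (hε : OrientOK G ε)
    (k : ℕ) (hk : 2 ≤ k) (hdeg : ∀ v : V, G.degree v ≤ k) :
    ∀ x : PosElem V ↥G.edgeSet,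
      {y | PosCovBy G ε x y}.ncard ≤ k + 1 ∧
      {y | PosLt G ε x y}.ncard ≤ 2 * k + 6 :=
  degree_bounds_general G ε hε k hk hdeg
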